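/- arXiv:1307.6808 — 2 statements merged into one kernel-verified Lean document; each statement's English description precedes it below -/
import Mathlib

section
/- Let n, n', n'' be positive integers and let c ∈ ℂ^n, c' ∈ ℂ^{n'}, c'' ∈ ℂ^{n''} be tuples of complex parameters. Then for all u, v ∈ ℂ the fused operators satisfy the Yang–Baxter equation on V^{⊗n} ⊗ V^{⊗n'} ⊗ V^{⊗n''}: R_{c,c'}(u) · R_{c,c''}(u+v) · R_{c',c''}(v) = R_{c',c''}(v) · R_{c,c''}(u+v) · R_{c,c'}(u), where R_{c,c'}(u) acts on the first two blocks and identically on the third, R_{c,c''}(u+v) acts on the first and third blocks and identically on the second, and R_{c',c''}(v) acts on the last two blocks and identically on the first. -/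
/-!
We model the finite-dimensional complex vector space `V` as `ℂ^N` (i.e. `Fin N → ℂ`),
so that `V^{⊗ n}` is `(Fin n → Fin N) → ℂ` and endomorphisms of `V^{⊗ n}` are matrices
indexed by multi-indices `Fin n → Fin N`.
-/

open scoped BigOperators

noncomputable section

/-- Endomorphisms of `V ⊗ V` for `V = ℂ^N`. -/
abbrev End2 (N : ℕ) := Matrix (Fin N × Fin N) (Fin N × Fin N) ℂ

/-- Endomorphisms of `V^{⊗ n}` for `V = ℂ^N`. -/
abbrev EndT (N n : ℕ) := Matrix (Fin n → Fin N) (Fin n → Fin N) ℂ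

/-- `X_{a,b}` : the endomorphism `X` of `V ⊗ V` applied to the tensor factors `a` and `b`
(in that order) of `V^{⊗ n}`, and the identity on all other factors. -/
def op2 (N n : ℕ) (X : End2 N) (a b : Fin n) : EndT N n :=
  fun f g => X (f a, f b) (g a, g b) *
    ∏ i : Fin n, if i ≠ a ∧ i ≠ b then (if f i = g i then (1 : ℂ) else 0) else 1

/-- The flip (permutation) operator `P : x ⊗ y ↦ y ⊗ x` on `V ⊗ V`. -/
def flipMat (N : ℕ) : End2 N := fun p q => if p.1 = q.2 ∧ p.2 = q.1 then 1 else 0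

/-- `R` is a solution of the Yang--Baxter equation (with additive spectral parameters)
on `V ⊗ V ⊗ V`:  `R₁₂(u) R₁₃(u+v) R₂₃(v) = R₂₃(v) R₁₃(u+v) R₁₂(u)`. -/
def YangBaxter (N : ℕ) (R : ℂ → End2 N) : Prop :=
  ∀ u v : ℂ,
    op2 N 3 (R u) 0 1 * op2 N 3 (R (u + v)) 0 2 * op2 N 3 (R v) 1 2 =
    op2 N 3 (R v) 1 2 * op2 N 3 (R (u + v)) 0 2 * op2 N 3 (R u) 0 1

/-- The fused operator `R_{c,c'}(u)`, acting on `V^{⊗ m}`, where the `n` factors of the first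
block are embedded via `a` and the `n'` factors of the second block via `b`:
`R_{c,c'}(u) = ∏→_{i=1..n'} [ R_{n,i'}(u+c_n−c'_i) ⋯ R_{2,i'}(u+c_2−c'_i) R_{1,i'}(u+c_1−c'_i) ]`. -/
def fusedOp (N : ℕ) (R : ℂ → End2 N) {m n n' : ℕ} (a : Fin n → Fin m) (b : Fin n' → Fin m)
    (c : Fin n → ℂ) (c' : Fin n' → ℂ) (u : ℂ) : EndT N m :=
  ((List.finRange n').map fun i =>
    (((List.finRange n).reverse).map fun k =>
      op2 N m (R (u + c k - c' i)) (a k) (b i)).prod).prod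

/-- The list of pairs `(i,j)` with `i < j`, in lexicographic order. -/
def lexPairs (n : ℕ) : List (Fin n × Fin n) :=
  (List.finRange n).flatMap fun i =>
    ((List.finRange n).filter fun j => decide (i < j)).map fun j => (i, j)

/-- The operator `F(c) = ∏→_{1 ≤ i < j ≤ n} R_{i,j}(c_i − c_j)` on `V^{⊗ n}`
(product over the pairs `i < j` in lexicographic order). -/
def Fop (N : ℕ) (R : ℂ → End2 N) {n : ℕ} (c : Fin n → ℂ) : EndT N n :=
  ((lexPairs n).map fun p => op2 N n (R (c p.1 - c p.2)) p.1 p.2).prod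

/-- The endomorphism of `V^{⊗ n}` embedded into `V^{⊗ m}`, acting on the factors listed
by `e` and identically on all other factors. -/
def opBlock (N : ℕ) {m n : ℕ} (e : Fin n → Fin m) (X : EndT N n) : EndT N m :=
  fun f g => X (f ∘ e) (g ∘ e) *
    ∏ i : Fin m, if ∀ k, e k ≠ i then (if f i = g i then (1 : ℂ) else 0) else 1

/-- The operator `P_π` on `V^{⊗ n}` permuting the tensor factors:
`P_π (x_1 ⊗ ⋯ ⊗ x_n) = x_{π(1)} ⊗ ⋯ ⊗ x_{π(n)}`. -/
def permMat (N n : ℕ) (π : Equiv.Perm (Fin n)) : EndT N n :=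
  fun f g => if f = g ∘ π then 1 else 0

/-- The tensor product of a vector of `V^{⊗ n}` and a vector of `V^{⊗ n'}`,
as a vector of `V^{⊗ (n+n')}`. -/
def tensVec (N : ℕ) {n n' : ℕ} (x : (Fin n → Fin N) → ℂ) (y : (Fin n' → Fin N) → ℂ) :
    (Fin (n + n') → Fin N) → ℂ :=
  fun f => x (fun i => f (Fin.castAdd n' i)) * y (fun j => f (Fin.natAdd n j))

end

/-!
Give every tensor factor a spectral parameter, so that the `R`-matrix between factors `p` and `q`
carries the argument `x_p - x_q`. With `x = u + c` on the first block, `x = c'` on the second and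
`x = c'' - v` on the third, the three fused operators become products of such `R`-matrices, and
the fused Yang–Baxter equation follows from the train argument: the Yang–Baxter equation at three
factors, together with the commutation of `R`-matrices acting on disjoint pairs of factors, moves
one `R`-matrix through two monodromies (the RTT relation), then a monodromy through a fused
operator, and finally fused operators through each other, by induction on the block lengths.
-/

open Function Set

section TensorEmbedding

variable {N : ℕ}

open scoped Classical in
theorem opBlock_apply {m n : ℕ} (e : Fin n → Fin m) (X : EndT N n) (f g : Fin m → Fin N) :
    opBlock N e X f g = if EqOn f g (range e)ᶜ then X (f ∘ e) (g ∘ e) else 0 := by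
  have hprod : (∏ i : Fin m, if ∀ k, e k ≠ i then (if f i = g i then (1 : ℂ) else 0) else 1) =
      if EqOn f g (range e)ᶜ then 1 else 0 := by
    calc _ = ∏ i : Fin m, if (∀ k, e k ≠ i) → f i = g i then (1 : ℂ) else 0 :=
          Finset.prod_congr rfl fun i _ => by split_ifs <;> tauto
      _ = _ := by
        simp only [Fintype.prod_boole, EqOn, mem_compl_iff, mem_range, not_exists, ne_eq]
        congr
  rw [opBlock, hprod, mul_ite, mul_one, mul_zero]

theorem opBlock_mul {m n : ℕ} {e : Fin n → Fin m} (he : Injective e) (X Y : EndT N n) :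
    opBlock N e X * opBlock N e Y = opBlock N e (X * Y) := by
  ext f g
  simp only [Matrix.mul_apply, opBlock_apply]
  split_ifs with hfg
  · -- the intermediate indices that contribute are exactly the `extend e p f`
    symm
    refine Fintype.sum_of_injective (fun p => extend e p f)
      (fun p q hpq => by simpa only [extend_comp he] using congrArg (· ∘ e) hpq) _ _ ?_ ?_
    · rintro h hh
      rw [if_neg, zero_mul]
      refine fun hfh => hh ⟨h ∘ e, funext fun i => ?_⟩
      by_cases hi : ∃ k, e k = i
      · obtain ⟨k, rfl⟩ := hi
        exact he.extend_apply _ _ k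
      · exact (extend_apply' _ _ _ hi).trans (hfh (by simpa using hi))
    · intro p
      have hoff : EqOn f (extend e p f) (range e)ᶜ := fun i hi =>
        (extend_apply' _ _ _ (by simpa using hi)).symm
      simp only [extend_comp he, if_pos hoff, if_pos (hoff.symm.trans hfg)]
  · refine Finset.sum_eq_zero fun h _ => ?_
    split_ifs with h1 h2
    · exact absurd (h1.trans h2) hfg
    all_goals simp

theorem opBlock_comp {m n k : ℕ} {e : Fin n → Fin m} (he : Injective e) (e' : Fin k → Fin n)
    (X : EndT N k) : opBlock N e (opBlock N e' X) = opBlock N (e ∘ e') X := by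
  classical
  ext f g
  simp only [opBlock_apply, ← ite_and]
  refine if_congr ⟨fun ⟨h, h'⟩ i hi => ?_, fun h => ⟨fun i hi => h ?_, fun j hj => h ?_⟩⟩ rfl rfl
  · by_cases hie : i ∈ range e
    · obtain ⟨j, rfl⟩ := hie
      exact h' fun ⟨l, hl⟩ => hi ⟨l, congrArg e hl⟩
    · exact h hie
  · exact fun ⟨j, hj⟩ => hi ⟨e' j, hj⟩
  · exact fun ⟨l, hl⟩ => hj ⟨l, he hl⟩

open scoped Classical in
theorem opBlock_mul_opBlock_apply_of_disjoint {m n k : ℕ} {e : Fin n → Fin m}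
    {e' : Fin k → Fin m} (hd : Disjoint (range e) (range e')) (X : EndT N n) (Y : EndT N k)
    (f g : Fin m → Fin N) :
    (opBlock N e X * opBlock N e' Y) f g =
      if EqOn f g (range e ∪ range e')ᶜ then X (f ∘ e) (g ∘ e) * Y (f ∘ e') (g ∘ e') else 0 := by
  -- the only intermediate index that contributes
  set h₀ := (range e).piecewise g f
  have hon : EqOn h₀ g (range e) := piecewise_eqOn _ _ _
  have hoff : EqOn h₀ f (range e)ᶜ := piecewise_eqOn_compl _ _ _
  rw [Matrix.mul_apply, Fintype.sum_eq_single h₀]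
  · have hon' : h₀ ∘ e = g ∘ e := funext fun k => hon ⟨k, rfl⟩
    have hoff' : h₀ ∘ e' = f ∘ e' := funext fun k => hoff (hd.notMem_of_mem_right ⟨k, rfl⟩)
    have hcond : EqOn h₀ g (range e')ᶜ ↔ EqOn f g (range e ∪ range e')ᶜ := by
      refine ⟨fun h i hi => ?_, fun h i hi => ?_⟩
      · simp only [compl_union, mem_inter_iff] at hi
        exact (hoff hi.1).symm.trans (h hi.2)
      · by_cases hie : i ∈ range e
        · exact hon hie
        · exact (hoff hie).trans (h (by simp_all))
    simp only [opBlock_apply, hon', hoff', if_pos hoff.symm, hcond, mul_ite, mul_zero]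
  · intro h hne
    simp only [opBlock_apply]
    split_ifs with h₁ h₂
    · refine absurd (funext fun i => ?_) hne
      by_cases hie : i ∈ range e
      · exact (h₂ (hd.notMem_of_mem_left hie)).trans (hon hie).symm
      · exact (h₁ hie).symm.trans (hoff hie).symm
    all_goals simp

theorem commute_opBlock_of_disjoint {m n k : ℕ} {e : Fin n → Fin m} {e' : Fin k → Fin m}
    (hd : Disjoint (range e) (range e')) (X : EndT N n) (Y : EndT N k) :
    Commute (opBlock N e X) (opBlock N e' Y) :=
  Matrix.ext fun f g => by
    rw [opBlock_mul_opBlock_apply_of_disjoint hd, opBlock_mul_opBlock_apply_of_disjoint hd.symm,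
      union_comm, mul_comm]

theorem op2_eq_opBlock {m : ℕ} (X : End2 N) (a b : Fin m) :
    op2 N m X a b = opBlock N ![a, b] (X.submatrix (finTwoArrowEquiv _) (finTwoArrowEquiv _)) := by
  ext f g
  refine congrArg _ (Finset.prod_congr rfl fun i _ => if_congr ?_ rfl rfl)
  simp [Fin.forall_fin_two, eq_comm]

theorem commute_op2 {m : ℕ} (X Y : End2 N) {a b c d : Fin m}
    (hac : a ≠ c) (had : a ≠ d) (hbc : b ≠ c) (hbd : b ≠ d) :
    Commute (op2 N m X a b) (op2 N m Y c d) := by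
  rw [op2_eq_opBlock, op2_eq_opBlock]
  exact commute_opBlock_of_disjoint (by simp [*, hac.symm, had.symm, hbc.symm, hbd.symm]) _ _

theorem opBlock_op2 {m n : ℕ} {e : Fin n → Fin m} (he : Injective e) (X : End2 N) (i j : Fin n) :
    opBlock N e (op2 N n X i j) = op2 N m X (e i) (e j) := by
  rw [op2_eq_opBlock, opBlock_comp he, op2_eq_opBlock]
  congr 1
  ext k
  fin_cases k <;> rfl

theorem YangBaxter.op2_braid {R : ℂ → End2 N} (hR : YangBaxter N R) {m : ℕ} {a b c : Fin m}
    (hab : a ≠ b) (hac : a ≠ c) (hbc : b ≠ c) (u v : ℂ) :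
    op2 N m (R u) a b * op2 N m (R (u + v)) a c * op2 N m (R v) b c =
      op2 N m (R v) b c * op2 N m (R (u + v)) a c * op2 N m (R u) a b := by
  have he : Injective ![a, b, c] := by
    intro x y hxy
    fin_cases x <;> fin_cases y <;> simp_all [eq_comm]
  have h := congrArg (opBlock N ![a, b, c]) (hR u v)
  simpa only [← opBlock_mul he, opBlock_op2 he, Matrix.cons_val_zero, Matrix.cons_val_one,
    Matrix.cons_val_two, Matrix.head_cons, Matrix.tail_cons] using h

end TensorEmbedding

theorem mul_mul_mul_assoc_of_braid {M : Type*} [Semigroup M] {a b c : M}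
    (h : a * b * c = c * b * a) (x : M) : a * (b * (c * x)) = c * (b * (a * x)) := by
  simp only [← mul_assoc, h]

section Monodromy

variable {N : ℕ} (R : ℂ → End2 N) {m : ℕ}

/-- `P` lists pairs (tensor factor, spectral parameter); this is the paper's
`R_{p_k,q}(x_{p_k} - x_q) ⋯ R_{p_1,q}(x_{p_1} - x_q)` for `P = [p_1, …, p_k]`. -/
def monodromy (P : List (Fin m × ℂ)) (q : Fin m × ℂ) : EndT N m :=
  (P.reverse.map fun p => op2 N m (R (p.2 - q.2)) p.1 q.1).prod

def listFusedOp (P Q : List (Fin m × ℂ)) : EndT N m :=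
  (Q.map (monodromy R P)).prod

theorem monodromy_cons (p : Fin m × ℂ) (P : List (Fin m × ℂ)) (q : Fin m × ℂ) :
    monodromy R (p :: P) q = monodromy R P q * op2 N m (R (p.2 - q.2)) p.1 q.1 := by
  simp [monodromy]

theorem listFusedOp_cons (P : List (Fin m × ℂ)) (q : Fin m × ℂ) (Q : List (Fin m × ℂ)) :
    listFusedOp R P (q :: Q) = monodromy R P q * listFusedOp R P Q := by
  simp [listFusedOp]

theorem fusedOp_eq_listFusedOp {n n' : ℕ} (a : Fin n → Fin m) (b : Fin n' → Fin m)
    (c : Fin n → ℂ) (c' : Fin n' → ℂ) (u : ℂ) {x : Fin n → ℂ} {y : Fin n' → ℂ}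
    (hxy : ∀ k i, x k - y i = u + c k - c' i) :
    fusedOp N R a b c c' u =
      listFusedOp R (List.ofFn fun k => (a k, x k)) (List.ofFn fun i => (b i, y i)) := by
  simp only [fusedOp, listFusedOp, List.ofFn_eq_map, List.map_map]
  refine congrArg _ (List.map_congr_left fun i _ => ?_)
  simp [monodromy, Function.comp_def, hxy]

theorem commute_op2_monodromy (X : End2 N) {a b : Fin m} {P : List (Fin m × ℂ)}
    {q : Fin m × ℂ} (ha : a ∉ q.1 :: P.map Prod.fst) (hb : b ∉ q.1 :: P.map Prod.fst) :
    Commute (op2 N m X a b) (monodromy R P q) := by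
  refine Commute.list_prod_right _ _ fun x hx => ?_
  obtain ⟨p, hp, rfl⟩ := List.mem_map.1 hx
  exact commute_op2 _ _ (by grind) (by grind) (by grind) (by grind)

theorem commute_op2_listFusedOp (X : End2 N) {a b : Fin m} {P Q : List (Fin m × ℂ)}
    (ha : a ∉ (P ++ Q).map Prod.fst) (hb : b ∉ (P ++ Q).map Prod.fst) :
    Commute (op2 N m X a b) (listFusedOp R P Q) := by
  refine Commute.list_prod_right _ _ fun x hx => ?_
  obtain ⟨q, hq, rfl⟩ := List.mem_map.1 hx
  exact commute_op2_monodromy R X (by grind) (by grind)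

theorem commute_monodromy_monodromy {P P' : List (Fin m × ℂ)} {q q' : Fin m × ℂ}
    (h : ∀ x ∈ q.1 :: P.map Prod.fst, x ∉ q'.1 :: P'.map Prod.fst) :
    Commute (monodromy R P q) (monodromy R P' q') := by
  refine Commute.list_prod_left _ _ fun x hx => ?_
  obtain ⟨p, hp, rfl⟩ := List.mem_map.1 hx
  exact commute_op2_monodromy R _ (h _ (by grind)) (h _ (by grind))

theorem commute_monodromy_listFusedOp {P P' Q' : List (Fin m × ℂ)} {q : Fin m × ℂ}
    (h : ∀ x ∈ q.1 :: P.map Prod.fst, x ∉ (P' ++ Q').map Prod.fst) :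
    Commute (monodromy R P q) (listFusedOp R P' Q') := by
  refine Commute.list_prod_left _ _ fun x hx => ?_
  obtain ⟨p, hp, rfl⟩ := List.mem_map.1 hx
  exact commute_op2_listFusedOp R _ (h _ (by grind)) (h _ (by grind))

variable {R}

theorem monodromy_yangBaxter (hR : YangBaxter N R) {P : List (Fin m × ℂ)} {q s : Fin m × ℂ}
    (h : ((P ++ [q, s]).map Prod.fst).Nodup) :
    monodromy R P q * monodromy R P s * op2 N m (R (q.2 - s.2)) q.1 s.1 =
      op2 N m (R (q.2 - s.2)) q.1 s.1 * monodromy R P s * monodromy R P q := by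
  induction P with
  | nil => simp [monodromy]
  | cons p P ih =>
    have hyb := hR.op2_braid (a := p.1) (b := q.1) (c := s.1) (by grind) (by grind) (by grind)
      (p.2 - q.2) (q.2 - s.2)
    rw [sub_add_sub_cancel, mul_assoc, mul_assoc] at hyb
    have hpq : Commute (op2 N m (R (p.2 - q.2)) p.1 q.1) (monodromy R P s) :=
      commute_op2_monodromy R _ (by grind) (by grind)
    have hps : Commute (monodromy R P q) (op2 N m (R (p.2 - s.2)) p.1 s.1) :=
      (commute_op2_monodromy R _ (by grind) (by grind)).symm
    simp only [monodromy_cons, mul_assoc]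
    rw [hpq.left_comm, hyb, mul_mul_mul_assoc_of_braid (ih (by grind)), hps.left_comm]

theorem listFusedOp_monodromy_yangBaxter (hR : YangBaxter N R) {P Q : List (Fin m × ℂ)}
    {s : Fin m × ℂ} (h : ((P ++ Q ++ [s]).map Prod.fst).Nodup) :
    listFusedOp R P Q * monodromy R P s * monodromy R Q s =
      monodromy R Q s * monodromy R P s * listFusedOp R P Q := by
  induction Q with
  | nil => simp [listFusedOp, monodromy]
  | cons q Q ih =>
    have hrtt := monodromy_yangBaxter hR (P := P) (q := q) (s := s) (by grind)
    have hqQ : Commute (monodromy R P q) (monodromy R Q s) :=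
      commute_monodromy_monodromy R (by grind)
    have hqs : Commute (listFusedOp R P Q) (op2 N m (R (q.2 - s.2)) q.1 s.1) :=
      (commute_op2_listFusedOp R _ (by grind) (by grind)).symm
    simp only [listFusedOp_cons, monodromy_cons, mul_assoc]
    rw [mul_mul_mul_assoc_of_braid (ih (by grind)), hqs.eq, hqQ.left_comm,
      mul_mul_mul_assoc_of_braid hrtt]

theorem listFusedOp_yangBaxter (hR : YangBaxter N R) {P Q S : List (Fin m × ℂ)}
    (h : ((P ++ Q ++ S).map Prod.fst).Nodup) :
    listFusedOp R P Q * listFusedOp R P S * listFusedOp R Q S =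
      listFusedOp R Q S * listFusedOp R P S * listFusedOp R P Q := by
  induction S with
  | nil => simp [listFusedOp]
  | cons s S ih =>
    have hcol := listFusedOp_monodromy_yangBaxter hR (P := P) (Q := Q) (s := s) (by grind)
    have hPS : Commute (listFusedOp R P S) (monodromy R Q s) :=
      (commute_monodromy_listFusedOp R (by grind)).symm
    have hQS : Commute (monodromy R P s) (listFusedOp R Q S) :=
      commute_monodromy_listFusedOp R (by grind)
    have ih' := ih (by grind)
    simp only [listFusedOp_cons, mul_assoc] at ih' ⊢
    rw [hPS.left_comm, mul_mul_mul_assoc_of_braid hcol, ih', hQS.left_comm]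

end Monodromy

theorem fused_yang_baxter_general
    (N : ℕ) (R : ℂ → End2 N) (hR : YangBaxter N R)
    (n n' n'' : ℕ)
    (c : Fin n → ℂ) (c' : Fin n' → ℂ) (c'' : Fin n'' → ℂ) (u v : ℂ) :
    fusedOp N R (fun k => Fin.castAdd n'' (Fin.castAdd n' k))
      (fun j => Fin.castAdd n'' (Fin.natAdd n j)) c c' u *
    fusedOp N R (fun k => Fin.castAdd n'' (Fin.castAdd n' k))
      (fun l => Fin.natAdd (n + n') l) c c'' (u + v) *
    fusedOp N R (fun j => Fin.castAdd n'' (Fin.natAdd n j))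
      (fun l => Fin.natAdd (n + n') l) c' c'' v =
    fusedOp N R (fun j => Fin.castAdd n'' (Fin.natAdd n j))
      (fun l => Fin.natAdd (n + n') l) c' c'' v *
    fusedOp N R (fun k => Fin.castAdd n'' (Fin.castAdd n' k))
      (fun l => Fin.natAdd (n + n') l) c c'' (u + v) *
    fusedOp N R (fun k => Fin.castAdd n'' (Fin.castAdd n' k))
      (fun j => Fin.castAdd n'' (Fin.natAdd n j)) c c' u := by
  rw [fusedOp_eq_listFusedOp R _ _ c c' u (x := fun k => u + c k) (y := c') (by intros; ring),
    fusedOp_eq_listFusedOp R _ _ c c'' (u + v) (x := fun k => u + c k) (y := fun l => c'' l - v)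
      (by intros; ring),
    fusedOp_eq_listFusedOp R _ _ c' c'' v (x := c') (y := fun l => c'' l - v) (by intros; ring)]
  refine listFusedOp_yangBaxter hR ?_
  -- the three blocks of factors enumerate `Fin (n + n' + n'')` in order
  have h := List.nodup_ofFn.2 (injective_id (α := Fin (n + n' + n'')))
  rw [List.ofFn_add, List.ofFn_add] at h
  simp only [List.map_append, List.map_ofFn, Function.comp_def, id] at h ⊢
  exact h

/-- The fused operators satisfy the Yang--Baxter equation on
`V^{⊗n} ⊗ V^{⊗n'} ⊗ V^{⊗n''}`. -/
theorem fused_yang_baxter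
    (N : ℕ) (R : ℂ → End2 N) (hR : YangBaxter N R)
    (n n' n'' : ℕ) (hn : 0 < n) (hn' : 0 < n') (hn'' : 0 < n'')
    (c : Fin n → ℂ) (c' : Fin n' → ℂ) (c'' : Fin n'' → ℂ) (u v : ℂ) :
    fusedOp N R (fun k => Fin.castAdd n'' (Fin.castAdd n' k))
      (fun j => Fin.castAdd n'' (Fin.natAdd n j)) c c' u *
    fusedOp N R (fun k => Fin.castAdd n'' (Fin.castAdd n' k))
      (fun l => Fin.natAdd (n + n') l) c c'' (u + v) *
    fusedOp N R (fun j => Fin.castAdd n'' (Fin.natAdd n j))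
      (fun l => Fin.natAdd (n + n') l) c' c'' v =
    fusedOp N R (fun j => Fin.castAdd n'' (Fin.natAdd n j))
      (fun l => Fin.natAdd (n + n') l) c' c'' v *
    fusedOp N R (fun k => Fin.castAdd n'' (Fin.castAdd n' k))
      (fun l => Fin.natAdd (n + n') l) c c'' (u + v) *
    fusedOp N R (fun k => Fin.castAdd n'' (Fin.castAdd n' k))
      (fun j => Fin.castAdd n'' (Fin.natAdd n j)) c c' u :=
  fused_yang_baxter_general N R hR n n' n'' c c' c'' u v
end

section
/- Let n, n' be positive integers, c ∈ ℂ^n and c' ∈ ℂ^{n'}. Then for all u ∈ ℂ the fused operator admits the alternative expression R_{c,c'}(u) = ∏_{i=n,…,1} [ R_{i,1'}(u+c_i−c'_1) R_{i,2'}(u+c_i−c'_2) ⋯ R_{i,n''}(u+c_i−c'_{n'}) ], where the outer product over i is taken with i decreasing from n to 1 (the leftmost group of factors corresponds to i = n). -/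
/-!
We model the finite-dimensional complex vector space `V` as `ℂ^N` (i.e. `Fin N → ℂ`),
so that `V^{⊗ n}` is `(Fin n → Fin N) → ℂ` and endomorphisms of `V^{⊗ n}` are matrices
indexed by multi-indices `Fin n → Fin N`.
-/

open scoped BigOperators

/-! Factors `R_{k,i'}` and `R_{l,j'}` with `k ≠ l` and `i ≠ j` act on four distinct tensor factors,
so they commute; this is all it takes to turn the product column by column into the product row
by row. -/

theorem op2_apply {N m : ℕ} (X : End2 N) (a b : Fin m) (f g : Fin m → Fin N) :
    op2 N m X a b f g =
      if ∀ i, i ≠ a → i ≠ b → f i = g i then X (f a, f b) (g a, g b) else 0 := by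
  have hfactor : ∀ i, (if i ≠ a ∧ i ≠ b then (if f i = g i then (1 : ℂ) else 0) else 1) =
      if i ≠ a → i ≠ b → f i = g i then 1 else 0 := by
    intro i
    by_cases ha : i = a <;> by_cases hb : i = b <;> simp [ha, hb]
  rw [op2, Finset.prod_congr rfl fun i _ => hfactor i, Fintype.prod_boole, mul_ite, mul_one,
    mul_zero]
  congr

theorem op2_mul_op2_apply_of_disjoint {N m : ℕ} (X Y : End2 N) {a b a' b' : Fin m}
    (haa' : a ≠ a') (hab' : a ≠ b') (hba' : b ≠ a') (hbb' : b ≠ b') (f g : Fin m → Fin N) :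
    (op2 N m X a b * op2 N m Y a' b') f g =
      if ∀ i, i ≠ a → i ≠ b → i ≠ a' → i ≠ b' → f i = g i then
        X (f a, f b) (g a, g b) * Y (f a', f b') (g a', g b')
      else 0 := by
  -- the only intermediate multi-index with a nonzero contribution
  set h₀ : Fin m → Fin N := fun i => if i = a ∨ i = b then g i else f i
  rw [Matrix.mul_apply, Finset.sum_eq_single h₀]
  · have h₀_off : ∀ i, i ≠ a → i ≠ b → h₀ i = f i := fun i ha hb => if_neg (by tauto)
    rw [op2_apply, if_pos fun i ha hb => (h₀_off i ha hb).symm, op2_apply, mul_ite, mul_zero,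
      h₀_off a' haa'.symm hba'.symm, h₀_off b' hab'.symm hbb'.symm]
    simp only [h₀, true_or, or_true, if_true]
    refine if_congr (forall_congr' fun i => ?_) rfl rfl
    by_cases ha : i = a <;> by_cases hb : i = b <;> simp_all
  · intro h _ hne
    rw [op2_apply, op2_apply]
    split_ifs with hf hg
    · refine absurd (funext fun i => ?_) hne
      by_cases hi : i = a ∨ i = b
      · rw [show h₀ i = g i from if_pos hi]
        rcases hi with rfl | rfl
        exacts [hg _ haa' hab', hg _ hba' hbb']
      · rw [show h₀ i = f i from if_neg hi]
        exact (hf i (not_or.mp hi).1 (not_or.mp hi).2).symm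
    all_goals simp
  · simp

theorem op2_commute_of_disjoint {N m : ℕ} (X Y : End2 N) {a b a' b' : Fin m}
    (haa' : a ≠ a') (hab' : a ≠ b') (hba' : b ≠ a') (hbb' : b ≠ b') :
    Commute (op2 N m X a b) (op2 N m Y a' b') := by
  ext f g
  rw [op2_mul_op2_apply_of_disjoint X Y haa' hab' hba' hbb',
    op2_mul_op2_apply_of_disjoint Y X haa'.symm hba'.symm hab'.symm hbb'.symm, mul_comm]
  exact if_congr (forall_congr' fun i => by tauto) rfl rfl

theorem List.prod_map_mul_of_commute {M β : Type*} [Monoid M] (f g : β → M) {L : List β}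
    (hL : L.Nodup) (hc : ∀ i ∈ L, ∀ j ∈ L, i ≠ j → Commute (g i) (f j)) :
    (L.map fun i => f i * g i).prod = (L.map f).prod * (L.map g).prod := by
  induction L with
  | nil => simp
  | cons i L ih =>
    obtain ⟨hiL, hL⟩ := List.nodup_cons.mp hL
    have hgi : Commute (g i) (L.map f).prod := by
      refine Commute.list_prod_right _ _ fun y hy => ?_
      obtain ⟨j, hj, rfl⟩ := List.mem_map.mp hy
      exact hc i List.mem_cons_self j (List.mem_cons_of_mem _ hj)
        (ne_of_mem_of_not_mem hj hiL).symm
    simp only [List.map_cons, List.prod_cons]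
    rw [ih hL fun x hx y hy => hc x (List.mem_cons_of_mem _ hx) y (List.mem_cons_of_mem _ hy),
      mul_assoc, ← mul_assoc (g i), hgi.eq, mul_assoc, mul_assoc, ← mul_assoc]

theorem List.prod_map_prod_map_comm_of_commute {M α β : Type*} [Monoid M] (B : α → β → M)
    {L : List α} {L' : List β} (hL : L.Nodup) (hL' : L'.Nodup)
    (hc : ∀ k ∈ L, ∀ l ∈ L, ∀ i ∈ L', ∀ j ∈ L', k ≠ l → i ≠ j → Commute (B k i) (B l j)) :
    (L'.map fun i => (L.map fun k => B k i).prod).prod =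
      (L.map fun k => (L'.map fun i => B k i).prod).prod := by
  induction L with
  | nil => simp
  | cons k L ih =>
    obtain ⟨hkL, hL⟩ := List.nodup_cons.mp hL
    simp only [List.map_cons, List.prod_cons]
    rw [List.prod_map_mul_of_commute _ _ hL' fun i hi j hj hij => ?_,
      ih hL fun k' hk' l hl => hc k' (List.mem_cons_of_mem _ hk') l (List.mem_cons_of_mem _ hl)]
    refine Commute.list_prod_left _ _ fun y hy => ?_
    obtain ⟨l, hl, rfl⟩ := List.mem_map.mp hy
    exact hc l (List.mem_cons_of_mem _ hl) k List.mem_cons_self i hi j hj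
      (ne_of_mem_of_not_mem hl hkL) hij

theorem fused_alternative_form_general
    (N : ℕ) (R : ℂ → End2 N)
    (n n' : ℕ)
    (c : Fin n → ℂ) (c' : Fin n' → ℂ) (u : ℂ) :
    fusedOp N R (Fin.castAdd n') (Fin.natAdd n) c c' u =
    (((List.finRange n).reverse).map fun k =>
      ((List.finRange n').map fun i =>
        op2 N (n + n') (R (u + c k - c' i)) (Fin.castAdd n' k) (Fin.natAdd n i)).prod).prod := by
  have hblocks : ∀ (k : Fin n) (i : Fin n'), Fin.castAdd n' k ≠ Fin.natAdd n i := fun k i =>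
    Fin.ne_of_val_ne (by simp only [Fin.val_castAdd, Fin.val_natAdd]; omega)
  rw [fusedOp]
  exact List.prod_map_prod_map_comm_of_commute _ (List.nodup_reverse.mpr (List.nodup_finRange n))
    (List.nodup_finRange n') fun k _ l _ i _ j _ hkl hij => op2_commute_of_disjoint _ _
      (Fin.castAdd_injective n n' |>.ne hkl) (hblocks k j) (hblocks l i).symm
      ((Fin.strictMono_natAdd n).injective.ne hij)

/-- Alternative expression for the fused operator:
`R_{c,c'}(u) = ∏←_{i=n..1} [ R_{i,1'}(u+c_i−c'_1) R_{i,2'}(u+c_i−c'_2) ⋯ R_{i,n''}(u+c_i−c'_{n'}) ]`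
(the outer product with `i` decreasing from `n` to `1`). -/
theorem fused_alternative_form
    (N : ℕ) (R : ℂ → End2 N) (hR : YangBaxter N R)
    (n n' : ℕ) (hn : 0 < n) (hn' : 0 < n')
    (c : Fin n → ℂ) (c' : Fin n' → ℂ) (u : ℂ) :
    fusedOp N R (Fin.castAdd n') (Fin.natAdd n) c c' u =
    (((List.finRange n).reverse).map fun k =>
      ((List.finRange n').map fun i =>
        op2 N (n + n') (R (u + c k - c' i)) (Fin.castAdd n' k) (Fin.natAdd n i)).prod).prod :=
  fused_alternative_form_general N R n n' c c' u
end
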